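/- arXiv:1911.08378 — 4 statements merged into one kernel-verified Lean document; each statement's English description precedes it below -/
import Mathlib

section
/- Let V be a finite type, W : V → V → ℝ a row-substochastic matrix, α ∈ (0,1), and s ∈ V. If a vector x : V → ℝ satisfies x v = α·δ_{s,v} + (1−α) · ∑_{n ∈ V} x n · W n v for all v ∈ V (where δ_{s,v} = 1 if s = v and 0 otherwise), then x v = PPR_W(s, v) for all v ∈ V; i.e., the Personalized PageRank vector is the unique solution of the fixed-point equation. -/
open scoped BigOperators

/-- A matrix is row-substochastic if all entries are nonnegative and each row sums to at most 1. -/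
def RowSubstochastic {V : Type*} [Fintype V] (W : Matrix V V ℝ) : Prop :=
  (∀ i j, 0 ≤ W i j) ∧ ∀ i, ∑ j, W i j ≤ 1

/-- Personalized PageRank: `PPR W α s v = α * ∑' l, (1-α)^l * (W^l) s v`. -/
noncomputable def PPR {V : Type*} [Fintype V] [DecidableEq V]
    (W : Matrix V V ℝ) (α : ℝ) (s v : V) : ℝ :=
  α * ∑' l : ℕ, (1 - α) ^ l * (W ^ l) s v

/-! Row-substochasticity bounds the `ℓ∞` operator norm of `W` (its maximal absolute row sum)
by `1`, so `‖(1 - α) • W‖ < 1` and `1 - (1 - α) • W` is invertible with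
Neumann-series inverse `∑ₗ (1 - α)ˡ Wˡ`. The fixed-point equation reads
`x ᵥ* (1 - (1 - α) • W) = α • eₛ`, and multiplying by that inverse leaves `α` times its row `s`. -/

open Matrix

section LinftyOpNorm

attribute [local instance] Matrix.linftyOpNormedAddCommGroup Matrix.linftyOpNormedRing
  Matrix.linftyOpNormedSpace

variable {V : Type*} [Fintype V]

theorem RowSubstochastic.linfty_opNorm_le_one {W : Matrix V V ℝ} (hW : RowSubstochastic W) :
    ‖W‖ ≤ 1 := by
  rw [linfty_opNorm_def, ← NNReal.coe_one, NNReal.coe_le_coe, Finset.sup_le_iff]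
  intro i _
  rw [← NNReal.coe_le_coe, NNReal.coe_sum]
  simpa [Real.nnnorm_of_nonneg (hW.1 i _), abs_of_nonneg (hW.1 i _)] using hW.2 i

variable [DecidableEq V] {A : Matrix V V ℝ}

theorem Matrix.eq_vecMul_tsum_pow_of_eq_add_vecMul (hA : ‖A‖ < 1) {x b : V → ℝ}
    (hx : x = b + x ᵥ* A) : x = b ᵥ* ∑' l : ℕ, A ^ l := by
  -- instance search does not find completeness for the uniform structure of the local norm
  have := FiniteDimensional.complete ℝ (Matrix V V ℝ)
  have hb : b = x ᵥ* (1 - A) := by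
    rw [vecMul_sub, vecMul_one, eq_sub_iff_add_eq, ← hx]
  rw [hb, vecMul_vecMul]
  exact (congrArg (x ᵥ* ·) (mul_neg_geom_series A hA)).trans (vecMul_one x) |>.symm

theorem Matrix.tsum_pow_apply (hA : ‖A‖ < 1) (i j : V) :
    (∑' l : ℕ, A ^ l) i j = ∑' l : ℕ, (A ^ l) i j := by
  have := FiniteDimensional.complete ℝ (Matrix V V ℝ)
  have hs : Summable fun l : ℕ => A ^ l := summable_geometric_of_norm_lt_one hA
  have hrow : (∑' l : ℕ, A ^ l) i = ∑' l : ℕ, (A ^ l) i := tsum_apply hs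
  rw [hrow]
  exact tsum_apply (Pi.summable.mp hs i)

theorem RowSubstochastic.eq_vecMul_tsum_of_eq_add_smul_vecMul {W : Matrix V V ℝ}
    (hW : RowSubstochastic W) {c : ℝ} (hc : |c| < 1) {x b : V → ℝ}
    (hx : x = b + c • (x ᵥ* W)) :
    x = b ᵥ* Matrix.of fun i j => ∑' l : ℕ, c ^ l * (W ^ l) i j := by
  have hA : ‖c • W‖ < 1 :=
    calc ‖c • W‖ ≤ |c| * ‖W‖ := norm_smul_le c W
      _ ≤ |c| * 1 := by gcongr; exact hW.linfty_opNorm_le_one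
      _ < 1 := by rwa [mul_one]
  rw [← vecMul_smul] at hx
  convert eq_vecMul_tsum_pow_of_eq_add_vecMul hA hx using 2
  ext i j
  rw [tsum_pow_apply hA]
  simp [smul_pow]

end LinftyOpNorm

theorem ppr_fixed_point_unique
    {V : Type*} [Fintype V] [DecidableEq V] (W : Matrix V V ℝ)
    (hW : RowSubstochastic W) (α : ℝ) (hα : α ∈ Set.Ioo (0 : ℝ) 1) (s : V)
    (x : V → ℝ)
    (hx : ∀ v : V, x v =
      α * (if s = v then 1 else 0) + (1 - α) * ∑ n : V, x n * W n v) :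
    ∀ v : V, x v = PPR W α s v := by
  have hc : |1 - α| < 1 := abs_lt.mpr ⟨by linarith [hα.2], by linarith [hα.1]⟩
  have hx' : x = α • Pi.single s 1 + (1 - α) • (x ᵥ* W) := by
    ext v
    simp [hx v, Pi.single_apply, eq_comm, vecMul, dotProduct]
  intro v
  rw [hW.eq_vecMul_tsum_of_eq_add_smul_vecMul hc hx']
  simp [PPR, smul_vecMul]
end

section
/- Let V be a finite type, W : V → V → ℝ a row-substochastic matrix, α ∈ (0,1), and u ∈ V. Let W_c be the matrix obtained from W by replacing column u with the zero column. Then for every v ∈ V with v ≠ u, the last-visit (renewal) decomposition holds: PPR_W(u, v) = α^{−1} · PPR_W(u, u) · PPR_{W_c}(u, v). -/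
open scoped BigOperators

/-- `zeroColumn W u` is `W` with column `u` replaced by the zero column. -/
def zeroColumn {V : Type*} [DecidableEq V] (W : Matrix V V ℝ) (u : V) : Matrix V V ℝ :=
  fun n m => if m = u then 0 else W n m

section Aux

set_option linter.unusedSectionVars false

variable {V : Type*} [Fintype V] [DecidableEq V]

lemma rss_mul {A B : Matrix V V ℝ} (hA : RowSubstochastic A) (hB : RowSubstochastic B) :
    RowSubstochastic (A * B) := by
  obtain ⟨hA0, hA1⟩ := hA
  obtain ⟨hB0, hB1⟩ := hB
  constructor
  · intro i j
    rw [Matrix.mul_apply]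
    exact Finset.sum_nonneg fun k _ => mul_nonneg (hA0 i k) (hB0 k j)
  · intro i
    simp only [Matrix.mul_apply]
    rw [Finset.sum_comm]
    calc ∑ k, ∑ j, A i k * B k j = ∑ k, A i k * ∑ j, B k j := by
          simp [Finset.mul_sum]
      _ ≤ ∑ k, A i k * 1 := by
          refine Finset.sum_le_sum fun k _ => ?_
          exact mul_le_mul_of_nonneg_left (hB1 k) (hA0 i k)
      _ = ∑ k, A i k := by simp
      _ ≤ 1 := hA1 i

lemma rss_pow {A : Matrix V V ℝ} (hA : RowSubstochastic A) (l : ℕ) :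
    RowSubstochastic (A ^ l) := by
  induction l with
  | zero =>
    constructor
    · intro i j
      simp [Matrix.one_apply]
      split <;> norm_num
    · intro i
      simp [Matrix.one_apply]
  | succ n ih => rw [pow_succ]; exact rss_mul ih hA

lemma rss_entry_le_one {A : Matrix V V ℝ} (hA : RowSubstochastic A) (i j : V) :
    A i j ≤ 1 := by
  calc A i j ≤ ∑ k, A i k :=
        Finset.single_le_sum (fun k _ => hA.1 i k) (Finset.mem_univ j)
    _ ≤ 1 := hA.2 i

lemma rss_zeroColumn {W : Matrix V V ℝ} (hW : RowSubstochastic W) (u : V) :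
    RowSubstochastic (zeroColumn W u) := by
  constructor
  · intro i j
    unfold zeroColumn
    split
    · exact le_refl 0
    · exact hW.1 i j
  · intro i
    calc ∑ j, zeroColumn W u i j ≤ ∑ j, W i j := by
          refine Finset.sum_le_sum fun j _ => ?_
          unfold zeroColumn
          split
          · exact hW.1 i j
          · exact le_refl _
      _ ≤ 1 := hW.2 i

lemma zc_pow_into_u (W : Matrix V V ℝ) (u : V) (m : ℕ) (x : V) :
    ((zeroColumn W u) ^ (m + 1)) x u = 0 := by
  rw [pow_succ, Matrix.mul_apply]
  refine Finset.sum_eq_zero fun w _ => ?_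
  simp [zeroColumn]

lemma zc_pow_uu (W : Matrix V V ℝ) (u : V) (m : ℕ) :
    ((zeroColumn W u) ^ m) u u = if m = 0 then 1 else 0 := by
  cases m with
  | zero => simp [Matrix.one_apply]
  | succ n => simp [zc_pow_into_u]

lemma key_decomp (W : Matrix V V ℝ) (u : V) (l : ℕ) :
    ∀ v : V, v ≠ u → (W ^ l) u v =
      ∑ k ∈ Finset.range (l + 1), (W ^ k) u u * ((zeroColumn W u) ^ (l - k)) u v := by
  induction l with
  | zero =>
    intro v hv
    simp [Matrix.one_apply, hv.symm, Ne.symm hv]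
  | succ l ih =>
    intro v hv
    have hWc : ∀ w : V, W w v = zeroColumn W u w v := by
      intro w; simp [zeroColumn, hv]
    rw [pow_succ, Matrix.mul_apply]
    have step1 : ∑ w, (W ^ l) u w * W w v
        = (W ^ l) u u * zeroColumn W u u v
          + ∑ w ∈ Finset.univ \ {u}, (W ^ l) u w * zeroColumn W u w v := by
      simp_rw [hWc]
      exact Finset.sum_eq_add_sum_sdiff_singleton_of_mem (Finset.mem_univ u)
        (fun w => (W ^ l) u w * zeroColumn W u w v)
    rw [step1]
    have step2 : ∀ w ∈ Finset.univ \ {u}, (W ^ l) u w * zeroColumn W u w v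
        = ∑ k ∈ Finset.range (l + 1),
            (W ^ k) u u * (((zeroColumn W u) ^ (l - k)) u w * zeroColumn W u w v) := by
      intro w hw
      rw [Finset.mem_sdiff, Finset.mem_singleton] at hw
      rw [ih w hw.2, Finset.sum_mul]
      exact Finset.sum_congr rfl fun k _ => by ring
    rw [Finset.sum_congr rfl step2, Finset.sum_comm]
    have step3 : ∀ k ∈ Finset.range (l + 1),
        ∑ w ∈ Finset.univ \ {u},
          (W ^ k) u u * (((zeroColumn W u) ^ (l - k)) u w * zeroColumn W u w v)
        = (W ^ k) u u * (((zeroColumn W u) ^ (l - k + 1)) u v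
            - (if l - k = 0 then 1 else 0) * zeroColumn W u u v) := by
      intro k _
      rw [← Finset.mul_sum]
      congr 1
      have : ∑ w ∈ Finset.univ \ {u}, ((zeroColumn W u) ^ (l - k)) u w * zeroColumn W u w v
          = (∑ w, ((zeroColumn W u) ^ (l - k)) u w * zeroColumn W u w v)
            - ((zeroColumn W u) ^ (l - k)) u u * zeroColumn W u u v := by
        rw [Finset.sum_eq_add_sum_sdiff_singleton_of_mem (Finset.mem_univ u)
          (fun w => ((zeroColumn W u) ^ (l - k)) u w * zeroColumn W u w v)]
        ring
      rw [this, ← Matrix.mul_apply, ← pow_succ, zc_pow_uu]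
    rw [Finset.sum_congr rfl step3]
    have expand : ∑ k ∈ Finset.range (l + 1),
        (W ^ k) u u * (((zeroColumn W u) ^ (l - k + 1)) u v
          - (if l - k = 0 then 1 else 0) * zeroColumn W u u v)
        = (∑ k ∈ Finset.range (l + 1), (W ^ k) u u * ((zeroColumn W u) ^ (l - k + 1)) u v)
          - ∑ k ∈ Finset.range (l + 1),
              (W ^ k) u u * ((if l - k = 0 then 1 else 0) * zeroColumn W u u v) := by
      rw [← Finset.sum_sub_distrib]
      exact Finset.sum_congr rfl fun k _ => by ring
    rw [expand]
    have ifsum : ∑ k ∈ Finset.range (l + 1),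
        (W ^ k) u u * ((if l - k = 0 then 1 else 0) * zeroColumn W u u v)
        = (W ^ l) u u * zeroColumn W u u v := by
      rw [Finset.sum_eq_single l]
      · simp
      · intro k hk hkl
        rw [Finset.mem_range] at hk
        have : l - k ≠ 0 := by omega
        simp [this]
      · intro h; exact absurd (Finset.self_mem_range_succ l) h
    rw [ifsum]
    have idx : ∀ k ∈ Finset.range (l + 1),
        (W ^ k) u u * ((zeroColumn W u) ^ (l - k + 1)) u v
        = (W ^ k) u u * ((zeroColumn W u) ^ (l + 1 - k)) u v := by
      intro k hk
      rw [Finset.mem_range] at hk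
      have hx : l - k + 1 = l + 1 - k := by omega
      rw [hx]
    rw [Finset.sum_congr rfl idx]
    rw [Finset.sum_range_succ (fun k => (W ^ k) u u * ((zeroColumn W u) ^ (l + 1 - k)) u v) (l+1)]
    have : ((zeroColumn W u) ^ (l + 1 - (l + 1))) u v = 0 := by
      simp [Matrix.one_apply, Ne.symm hv]
    rw [this]
    ring

end Aux

theorem ppr_last_visit_decomposition
    {V : Type*} [Fintype V] [DecidableEq V] (W : Matrix V V ℝ)
    (hW : RowSubstochastic W) (α : ℝ) (hα : α ∈ Set.Ioo (0 : ℝ) 1) (u : V) :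
    ∀ v : V, v ≠ u →
      PPR W α u v = α⁻¹ * PPR W α u u * PPR (zeroColumn W u) α u v := by
  intro v hv
  obtain ⟨hα0, hα1⟩ := hα
  have hr0 : (0:ℝ) ≤ 1 - α := by linarith
  have hr1 : 1 - α < 1 := by linarith
  set Wc := zeroColumn W u with hWcdef
  have hWc : RowSubstochastic Wc := rss_zeroColumn hW u
  -- summability of norms
  have habs : ∀ (A : Matrix V V ℝ), RowSubstochastic A → ∀ x y : V,
      Summable fun l : ℕ => ‖(1 - α) ^ l * (A ^ l) x y‖ := by
    intro A hA x y
    refine Summable.of_nonneg_of_le (fun l => norm_nonneg _) (fun l => ?_)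
      (summable_geometric_of_lt_one hr0 hr1)
    have h1 : |(A ^ l) x y| ≤ 1 := by
      rw [abs_le]
      constructor
      · linarith [(rss_pow hA l).1 x y]
      · exact rss_entry_le_one (rss_pow hA l) x y
    calc ‖(1 - α) ^ l * (A ^ l) x y‖ = (1 - α) ^ l * |(A ^ l) x y| := by
          rw [norm_mul, norm_pow]
          simp [Real.norm_eq_abs, abs_of_nonneg hr0]
      _ ≤ (1 - α) ^ l * 1 := by
          exact mul_le_mul_of_nonneg_left h1 (pow_nonneg hr0 l)
      _ = (1 - α) ^ l := by ring
  have hcauchy := tsum_mul_tsum_eq_tsum_sum_range_of_summable_norm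
    (habs W hW u u) (habs Wc hWc u v)
  have hsum_eq : ∀ l : ℕ, ∑ k ∈ Finset.range (l + 1),
      ((1 - α) ^ k * (W ^ k) u u) * ((1 - α) ^ (l - k) * (Wc ^ (l - k)) u v)
      = (1 - α) ^ l * (W ^ l) u v := by
    intro l
    rw [key_decomp W u l v hv, Finset.mul_sum]
    refine Finset.sum_congr rfl fun k hk => ?_
    rw [Finset.mem_range] at hk
    have : (1 - α) ^ k * (1 - α) ^ (l - k) = (1 - α) ^ l := by
      rw [← pow_add]
      congr 1
      omega
    calc ((1 - α) ^ k * (W ^ k) u u) * ((1 - α) ^ (l - k) * (Wc ^ (l - k)) u v)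
        = ((1 - α) ^ k * (1 - α) ^ (l - k)) * ((W ^ k) u u * (Wc ^ (l - k)) u v) := by ring
      _ = (1 - α) ^ l * ((W ^ k) u u * (Wc ^ (l - k)) u v) := by rw [this]
  simp_rw [hsum_eq] at hcauchy
  unfold PPR
  rw [← hcauchy]
  field_simp
end

section
/- Let V be a finite type, W : V → V → ℝ a row-substochastic matrix, α ∈ (0,1), and u ∈ V. Let W_c be the matrix obtained from W by replacing column u with the zero column, and let W_r be the matrix obtained from W by replacing row u with the zero row. Then for all n, v ∈ V with n ≠ u and v ≠ u, one has (W_c^l) n v = (W_r^l) n v for every l ≥ 0, and consequently PPR_{W_c}(n, v) = PPR_{W_r}(n, v); i.e., the Personalized PageRank of v for a non-u seed in the graph with all outgoing edges of u removed equals the walk sum restricted to walks avoiding u. -/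
open scoped BigOperators

/-- `zeroRow W u` is `W` with row `u` replaced by the zero row
(removal of all outgoing edges of `u`). -/
def zeroRow {V : Type*} [DecidableEq V] (W : Matrix V V ℝ) (u : V) : Matrix V V ℝ :=
  fun n m => if n = u then 0 else W n m


lemma zeroRow_pow_u {V : Type*} [Fintype V] [DecidableEq V] (W : Matrix V V ℝ) (u : V)
    (l : ℕ) {v : V} (hv : v ≠ u) : ((zeroRow W u) ^ l) u v = 0 := by
  cases l with
  | zero => simp [Matrix.one_apply, (Ne.symm hv)]
  | succ l =>
    rw [pow_succ', Matrix.mul_apply]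
    apply Finset.sum_eq_zero
    intro m _
    simp [zeroRow]

lemma pow_eq {V : Type*} [Fintype V] [DecidableEq V] (W : Matrix V V ℝ) (u : V) :
    ∀ (l : ℕ) (v : V), v ≠ u → ∀ n, n ≠ u →
      ((zeroColumn W u) ^ l) n v = ((zeroRow W u) ^ l) n v := by
  intro l
  induction l with
  | zero => intro v hv n hn; simp
  | succ l ih =>
    intro v hv n hn
    rw [pow_succ', pow_succ', Matrix.mul_apply, Matrix.mul_apply]
    apply Finset.sum_congr rfl
    intro m _
    by_cases hm : m = u
    · have h1 : zeroColumn W u n m = 0 := if_pos hm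
      have h2 : zeroRow W u n m = W n m := if_neg hn
      rw [h1, h2, zero_mul, hm, zeroRow_pow_u W u l hv, mul_zero]
    · simp only [zeroColumn, zeroRow, if_neg hm, if_neg hn]
      rw [ih v hv m hm]

theorem ppr_zero_column_eq_zero_row
    {V : Type*} [Fintype V] [DecidableEq V] (W : Matrix V V ℝ)
    (hW : RowSubstochastic W) (α : ℝ) (hα : α ∈ Set.Ioo (0 : ℝ) 1) (u : V) :
    ∀ n v : V, n ≠ u → v ≠ u →
      (∀ l : ℕ, ((zeroColumn W u) ^ l) n v = ((zeroRow W u) ^ l) n v) ∧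
      PPR (zeroColumn W u) α n v = PPR (zeroRow W u) α n v := by
  intro n v hn hv
  have key : ∀ l : ℕ, ((zeroColumn W u) ^ l) n v = ((zeroRow W u) ^ l) n v :=
    fun l => pow_eq W u l v hv n hn
  exact ⟨key, by unfold PPR; congr 1; exact tsum_congr fun l => by rw [key l]⟩
end

section
/- (Core of Theorem 2 of the paper: greedy edge removal by largest contribution is optimal.) Let V be a finite type, W : V → V → ℝ a row-stochastic matrix, α ∈ (0,1), and u ∈ V with W u u = 0. Let N := { n ∈ V : W u n > 0 } be the out-neighbors of u, let W_r be the matrix obtained from W by replacing row u with the zero row, and fix rec, rec* ∈ V with rec ≠ u, rec* ≠ u, W u rec = 0 and W u rec* = 0. For each n ∈ N define the contribution c(n) := W u n · ( PPR_{W_r}(n, rec) − PPR_{W_r}(n, rec*) ). Call a proper subset S ⊊ N counterfactual if PPR_{W_S}(u, rec) < PPR_{W_S}(u, rec*), where W_S is the renormalized-deletion matrix of W at u with respect to S (note ∑_{m ∈ S} W u m < 1 automatically since S is proper). Then: (i) a proper subset S ⊊ N is counterfactual if and only if ∑_{n ∈ N \ S} c(n) < 0; and (ii) if some counterfactual set of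 cardinality k exists, then every proper subset T ⊊ N with |T| = k satisfying c(i) ≥ c(j) for all i ∈ T and j ∈ N \ T is counterfactual; hence a minimum-cardinality counterfactual set can be chosen among the out-neighbors with the largest contributions. -/
open scoped BigOperators

/-- A matrix is row-stochastic if all entries are nonnegative and each row sums to exactly 1. -/
def RowStochastic {V : Type*} [Fintype V] (W : Matrix V V ℝ) : Prop :=
  (∀ i j, 0 ≤ W i j) ∧ ∀ i, ∑ j, W i j = 1

/-- The renormalized-deletion matrix of `W` at `u` with respect to `A`: it agrees with `W`
outside row `u`; in row `u`, the entries into `A` are set to `0` and the remaining entries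
are renormalized by `1 - ∑ x ∈ A, W u x`. -/
noncomputable def renormDel {V : Type*} [Fintype V] [DecidableEq V]
    (W : Matrix V V ℝ) (u : V) (A : Finset V) : Matrix V V ℝ :=
  fun n m =>
    if n = u then (if m ∈ A then 0 else W u m / (1 - ∑ x ∈ A, W u x)) else W n m

open scoped BigOperators
set_option linter.unusedSectionVars false
set_option maxHeartbeats 800000

section aux
variable {V : Type*} [Fintype V] [DecidableEq V]

def SubStoch (M : Matrix V V ℝ) : Prop := (∀ i j, 0 ≤ M i j) ∧ ∀ i, ∑ j, M i j ≤ 1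

lemma SubStoch.pow_nonneg {M : Matrix V V ℝ} (h : SubStoch M) (l : ℕ) (i j : V) :
    0 ≤ (M ^ l) i j := by
  induction l generalizing i j with
  | zero => simp [Matrix.one_apply]; positivity
  | succ n ih =>
    rw [pow_succ, Matrix.mul_apply]
    exact Finset.sum_nonneg fun m _ => mul_nonneg (ih i m) (h.1 m j)

lemma SubStoch.pow_rowsum {M : Matrix V V ℝ} (h : SubStoch M) (l : ℕ) (i : V) :
    ∑ j, (M ^ l) i j ≤ 1 := by
  induction l generalizing i with
  | zero => simp [Matrix.one_apply]
  | succ n ih =>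
    simp only [pow_succ, Matrix.mul_apply]
    rw [Finset.sum_comm]
    calc ∑ m, ∑ j, (M ^ n) i m * M m j = ∑ m, (M ^ n) i m * ∑ j, M m j := by
          simp [Finset.mul_sum]
      _ ≤ ∑ m, (M ^ n) i m * 1 := Finset.sum_le_sum fun m _ =>
          mul_le_mul_of_nonneg_left (h.2 m) (h.pow_nonneg n i m)
      _ ≤ 1 := by simpa using ih i

lemma SubStoch.pow_le_one {M : Matrix V V ℝ} (h : SubStoch M) (l : ℕ) (i j : V) :
    (M ^ l) i j ≤ 1 :=
  le_trans (Finset.single_le_sum (fun m _ => h.pow_nonneg l i m) (Finset.mem_univ j))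
    (h.pow_rowsum l i)

lemma SubStoch.summable {M : Matrix V V ℝ} (h : SubStoch M) {β : ℝ} (hβ0 : 0 ≤ β)
    (hβ1 : β < 1) (s v : V) : Summable (fun l : ℕ => β ^ l * (M ^ l) s v) := by
  refine Summable.of_nonneg_of_le
    (fun l => mul_nonneg (_root_.pow_nonneg hβ0 l) (h.pow_nonneg l s v))
    (fun l => ?_) (summable_geometric_of_lt_one hβ0 hβ1)
  calc β ^ l * (M ^ l) s v ≤ β ^ l * 1 :=
        mul_le_mul_of_nonneg_left (h.pow_le_one l s v) (_root_.pow_nonneg hβ0 l)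
    _ = β ^ l := mul_one _

/-- the entrywise resolvent series -/
noncomputable def Gm (M : Matrix V V ℝ) (β : ℝ) (s v : V) : ℝ :=
  ∑' l : ℕ, β ^ l * (M ^ l) s v

lemma Gm_nonneg {M : Matrix V V ℝ} (h : SubStoch M) {β : ℝ} (hβ0 : 0 ≤ β) (s v : V) :
    0 ≤ Gm M β s v :=
  tsum_nonneg fun l => mul_nonneg (_root_.pow_nonneg hβ0 l) (h.pow_nonneg l s v)

/-- the fixed-point equation G = I + β G M -/
lemma Gm_fixed {M : Matrix V V ℝ} (h : SubStoch M) {β : ℝ} (hβ0 : 0 ≤ β) (hβ1 : β < 1)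
    (s v : V) :
    Gm M β s v = (if s = v then (1:ℝ) else 0) + β * ∑ m, Gm M β s m * M m v := by
  have hsum := h.summable hβ0 hβ1
  rw [Gm, Summable.tsum_eq_zero_add (hsum s v)]
  congr 1
  · simp [Matrix.one_apply]
  have step : ∀ l : ℕ, β ^ (l+1) * (M ^ (l+1)) s v
      = ∑ m, β * ((β ^ l * (M ^ l) s m) * M m v) := by
    intro l
    rw [pow_succ M, Matrix.mul_apply, Finset.mul_sum]
    congr 1; ext m; ring
  calc ∑' l : ℕ, β ^ (l+1) * (M ^ (l+1)) s v
      = ∑' l : ℕ, ∑ m, β * ((β ^ l * (M ^ l) s m) * M m v) := tsum_congr step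
    _ = ∑ m, ∑' l : ℕ, β * ((β ^ l * (M ^ l) s m) * M m v) := by
        refine Summable.tsum_finsetSum fun m _ => ?_
        simpa [mul_assoc] using (((hsum s m).mul_right (M m v)).mul_left β)
    _ = β * ∑ m, Gm M β s m * M m v := by
        rw [Finset.mul_sum]
        refine Finset.sum_congr rfl fun m _ => ?_
        rw [tsum_mul_left, tsum_mul_right, Gm]

/-- uniqueness of the fixed point (as row vector equation) -/
lemma fixed_unique {M : Matrix V V ℝ} (h : SubStoch M) {β : ℝ} (hβ0 : 0 ≤ β) (hβ1 : β < 1)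
    {g g' : V → ℝ} {e : V → ℝ}
    (hg : ∀ v, g v = e v + β * ∑ m, g m * M m v)
    (hg' : ∀ v, g' v = e v + β * ∑ m, g' m * M m v) : g = g' := by
  set d : V → ℝ := fun v => g v - g' v with hd
  have hfix : ∀ v, d v = β * ∑ m, d m * M m v := by
    intro v
    simp only [hd]
    rw [hg v, hg' v,
      show (e v + β * ∑ m, g m * M m v) - (e v + β * ∑ m, g' m * M m v)
        = β * ∑ m, (g m * M m v - g' m * M m v) by rw [Finset.sum_sub_distrib]; ring]
    congr 1
    exact Finset.sum_congr rfl fun m _ => by ring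
  set t : ℝ := ∑ v, |d v| with ht
  have hle : t ≤ β * t := by
    calc t = ∑ v, |β * ∑ m, d m * M m v| := by
          rw [ht]; exact Finset.sum_congr rfl fun v _ => by rw [hfix v]
      _ ≤ ∑ v, β * ∑ m, |d m| * M m v := by
          refine Finset.sum_le_sum fun v _ => ?_
          rw [abs_mul, abs_of_nonneg hβ0]
          refine mul_le_mul_of_nonneg_left ?_ hβ0
          refine le_trans (Finset.abs_sum_le_sum_abs _ _) ?_
          refine Finset.sum_le_sum fun m _ => ?_
          rw [abs_mul, abs_of_nonneg (h.1 m v)]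
      _ = β * ∑ m, |d m| * ∑ v, M m v := by
          rw [← Finset.mul_sum, Finset.sum_comm]
          congr 1
          exact Finset.sum_congr rfl fun m _ => (Finset.mul_sum _ _ _).symm
      _ ≤ β * ∑ m, |d m| * 1 := by
          refine mul_le_mul_of_nonneg_left ?_ hβ0
          exact Finset.sum_le_sum fun m _ => mul_le_mul_of_nonneg_left (h.2 m) (abs_nonneg _)
      _ = β * t := by simp [ht]
  have ht0 : 0 ≤ t := Finset.sum_nonneg fun v _ => abs_nonneg _
  have htz : t = 0 := by nlinarith
  funext v
  have hv : |d v| ≤ t := Finset.single_le_sum (fun m _ => abs_nonneg (d m)) (Finset.mem_univ v)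
  have hv0 : |d v| = 0 := le_antisymm (htz ▸ hv) (abs_nonneg _)
  have := abs_eq_zero.mp hv0
  simpa [hd, sub_eq_zero] using this

lemma rowzero_pow {M : Matrix V V ℝ} {u : V} (h : ∀ m, M u m = 0) (l : ℕ) (v : V) :
    (M ^ l) u v = if l = 0 then (if u = v then (1:ℝ) else 0) else 0 := by
  cases l with
  | zero => simp [Matrix.one_apply]
  | succ n => simp [pow_succ', Matrix.mul_apply, h]

lemma partial_sum_le {M : Matrix V V ℝ} (hM : SubStoch M)
    {u : V} (h : ∀ m, M u m = 0) :
    ∀ L : ℕ, ∀ n : V, ∑ l ∈ Finset.range L, (M ^ l) n u ≤ 1 := by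
  intro L
  induction L with
  | zero => intro n; simp
  | succ L ih =>
    intro n
    by_cases hn : n = u
    · subst hn
      calc ∑ l ∈ Finset.range (L+1), (M ^ l) n n
          = ∑ l ∈ Finset.range (L+1), if l = 0 then (1:ℝ) else 0 := by
            refine Finset.sum_congr rfl fun l _ => by rw [rowzero_pow h]; simp
        _ ≤ 1 := by simp [Finset.sum_ite_eq']
    · rw [Finset.sum_range_succ']
      have h0 : (M ^ 0) n u = 0 := by simp [Matrix.one_apply, hn]
      rw [h0, add_zero]
      calc ∑ l ∈ Finset.range L, (M ^ (l+1)) n u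
          = ∑ l ∈ Finset.range L, ∑ m, M n m * (M ^ l) m u := by
            refine Finset.sum_congr rfl fun l _ => by rw [pow_succ', Matrix.mul_apply]
        _ = ∑ m, M n m * ∑ l ∈ Finset.range L, (M ^ l) m u := by
            rw [Finset.sum_comm]
            exact Finset.sum_congr rfl fun m _ => (Finset.mul_sum _ _ _).symm
        _ ≤ ∑ m, M n m * 1 := Finset.sum_le_sum fun m _ =>
            mul_le_mul_of_nonneg_left (ih m) (hM.1 n m)
        _ ≤ 1 := by simpa using hM.2 n

lemma Gm_col_le {M : Matrix V V ℝ} (hM : SubStoch M) {u : V} (h : ∀ m, M u m = 0)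
    {β : ℝ} (hβ0 : 0 ≤ β) (hβ1 : β < 1) {n : V} (hn : n ≠ u) :
    Gm M β n u ≤ β := by
  have hsummA : Summable (fun l : ℕ => (M ^ l) n u) :=
    summable_of_sum_range_le (fun l => hM.pow_nonneg l n u) (fun L => partial_sum_le hM h L n)
  have h1 : Gm M β n u ≤ ∑' l : ℕ, β * (M ^ l) n u := by
    refine Summable.tsum_le_tsum (fun l => ?_) (hM.summable hβ0 hβ1 n u) (hsummA.mul_left β)
    cases l with
    | zero => simp [Matrix.one_apply, hn]
    | succ k =>
      have hle : β ^ (k+1) ≤ β := pow_le_of_le_one hβ0 (le_of_lt hβ1) (Nat.succ_ne_zero k)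
      exact mul_le_mul_of_nonneg_right hle (hM.pow_nonneg _ n u)
  rw [tsum_mul_left] at h1
  have h2 : ∑' l : ℕ, (M ^ l) n u ≤ 1 :=
    Summable.tsum_le_of_sum_range_le hsummA (fun L => partial_sum_le hM h L n)
  calc Gm M β n u ≤ β * ∑' l : ℕ, (M ^ l) n u := h1
    _ ≤ β * 1 := mul_le_mul_of_nonneg_left h2 hβ0
    _ = β := mul_one β

end aux
section rowformula
variable {V : Type*} [Fintype V] [DecidableEq V]

/-- Regeneration identity: row `u` of the resolvent of `M` in terms of the resolvent of
`R` (the matrix with row `u` zeroed), when `M` agrees with `R` off row `u`. -/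
lemma row_formula {R M : Matrix V V ℝ} (hR : SubStoch R) (hM : SubStoch M) {u : V}
    (hRu : ∀ m, R u m = 0) (hMR : ∀ n m, n ≠ u → M n m = R n m)
    {β : ℝ} (hβpos : 0 < β) (hβ1 : β < 1)
    (hwsum : ∑ m, M u m = 1) (hMuu : M u u = 0) :
    ∃ t : ℝ, 0 < t ∧ ∀ v, Gm M β u v
      = (if u = v then (1:ℝ) else 0) + t * ∑ n, M u n * Gm R β n v := by
  have hβ0 : 0 ≤ β := le_of_lt hβpos
  set r' : ℝ := ∑ n, M u n * Gm R β n u with hr'def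
  set r : ℝ := β * r' with hrdef
  have hrr : r = β * r' := hrdef
  -- bound on r
  have hr'le : r' ≤ β := by
    have hterm : ∀ n, M u n * Gm R β n u ≤ M u n * β := by
      intro n
      by_cases hn : n = u
      · subst hn; rw [hMuu]; simp
      · exact mul_le_mul_of_nonneg_left (Gm_col_le hR hRu hβ0 hβ1 hn) (hM.1 u n)
    calc r' ≤ ∑ n, M u n * β := Finset.sum_le_sum fun n _ => hterm n
      _ = β := by rw [← Finset.sum_mul, hwsum, one_mul]
  have hr'0 : 0 ≤ r' :=
    Finset.sum_nonneg fun n _ => mul_nonneg (hM.1 u n) (Gm_nonneg hR hβ0 n u)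
  have hrlt : r < 1 := by
    have : r ≤ β * β := by rw [hrdef]; exact mul_le_mul_of_nonneg_left hr'le hβ0
    nlinarith
  have h1r : 0 < 1 - r := by linarith
  refine ⟨β / (1 - r), div_pos hβpos h1r, ?_⟩
  set t : ℝ := β / (1 - r) with htdef
  have htr : t * (1 - r) = β := div_mul_cancel₀ β (ne_of_gt h1r)
  -- the candidate row vector
  set g : V → ℝ := fun v => (if u = v then (1:ℝ) else 0) + t * ∑ n, M u n * Gm R β n v
    with hgdef
  -- the candidate satisfies the fixed-point equation
  have hgfix : ∀ v, g v = (if u = v then (1:ℝ) else 0) + β * ∑ m, g m * M m v := by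
    intro v
    set P : ℝ := ∑ n, M u n * Gm R β n v with hPdef
    set Q : ℝ := ∑ n, M u n * (∑ m, Gm R β n m * R m v) with hQdef
    -- e2 : splitting the inner sum
    have e2 : ∀ n, ∑ m, Gm R β n m * M m v
        = (∑ m, Gm R β n m * R m v) + Gm R β n u * M u v := by
      intro n
      have hterm : ∀ m, Gm R β n m * M m v
          = Gm R β n m * R m v + (if m = u then Gm R β n u * M u v else 0) := by
        intro m
        by_cases hm : m = u
        · subst hm; rw [hRu v, if_pos rfl]; ring
        · rw [hMR m v hm, if_neg hm, add_zero]
      rw [Finset.sum_congr rfl (fun m _ => hterm m), Finset.sum_add_distrib,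
        Finset.sum_ite_eq' Finset.univ u (fun _ => Gm R β n u * M u v)]
      simp
    -- e1 : expanding the candidate in the RHS sum
    have e1 : ∑ m, g m * M m v
        = M u v + t * ∑ n, M u n * (∑ m, Gm R β n m * M m v) := by
      have expand : ∀ m, g m * M m v
          = (if u = m then (1:ℝ) else 0) * M m v
            + t * ∑ n, M u n * (Gm R β n m * M m v) := by
        intro m
        rw [hgdef]; dsimp only
        rw [add_mul, mul_assoc, Finset.sum_mul]
        congr 2
        exact Finset.sum_congr rfl fun n _ => by ring
      rw [Finset.sum_congr rfl (fun m _ => expand m), Finset.sum_add_distrib]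
      congr 1
      · simp
      · rw [← Finset.mul_sum, Finset.sum_comm]
        congr 1
        exact Finset.sum_congr rfl fun n _ => (Finset.mul_sum _ _ _).symm
    -- f2 : the inner sums combined
    have f2 : ∑ n, M u n * (∑ m, Gm R β n m * M m v) = Q + r' * M u v := by
      calc ∑ n, M u n * (∑ m, Gm R β n m * M m v)
          = ∑ n, (M u n * (∑ m, Gm R β n m * R m v) + M u n * Gm R β n u * M u v) := by
            refine Finset.sum_congr rfl fun n _ => ?_
            rw [e2 n]; ring
        _ = Q + r' * M u v := by
            rw [Finset.sum_add_distrib, hQdef, hr'def, Finset.sum_mul]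
    -- f3 : β * Q = P - M u v
    have f3 : β * Q = P - M u v := by
      have e3 : ∀ n, β * ∑ m, Gm R β n m * R m v
          = Gm R β n v - (if n = v then (1:ℝ) else 0) := by
        intro n
        have := Gm_fixed hR hβ0 hβ1 n v
        linarith
      calc β * Q = ∑ n, M u n * (β * ∑ m, Gm R β n m * R m v) := by
            rw [hQdef, Finset.mul_sum]
            exact Finset.sum_congr rfl fun n _ => by ring
        _ = ∑ n, (M u n * Gm R β n v - M u n * (if n = v then (1:ℝ) else 0)) := by
            refine Finset.sum_congr rfl fun n _ => by rw [e3 n]; ring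
        _ = P - M u v := by
            rw [Finset.sum_sub_distrib, hPdef]
            congr 1
            simp
    calc g v = (if u = v then (1:ℝ) else 0) + t * P := by rw [hgdef]
      _ = (if u = v then (1:ℝ) else 0) + β * (M u v + t * (Q + r' * M u v)) := by
          linear_combination (-t) * f3 + (M u v) * htr + (t * M u v) * hrr
      _ = (if u = v then (1:ℝ) else 0) + β * ∑ m, g m * M m v := by
          rw [e1, f2]
  -- conclude by uniqueness
  have hfix' : ∀ v, Gm M β u v
      = (if u = v then (1:ℝ) else 0) + β * ∑ m, Gm M β u m * M m v :=
    fun v => Gm_fixed hM hβ0 hβ1 u v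
  have := fixed_unique hM hβ0 hβ1 hfix' hgfix
  intro v
  exact congrFun this v

end rowformula

section key
variable {V : Type*} [Fintype V] [DecidableEq V]

lemma key_formula (W : Matrix V V ℝ)
    (hW : RowStochastic W) (α : ℝ) (hα : α ∈ Set.Ioo (0:ℝ) 1)
    (u : V) (hWuu : W u u = 0)
    (rec recStar : V) (hrec : rec ≠ u) (hrecStar : recStar ≠ u)
    (N : Finset V) (hN : N = Finset.univ.filter (fun n => 0 < W u n))
    (c : V → ℝ)
    (hc : ∀ n, c n = W u n * (PPR (zeroRow W u) α n rec - PPR (zeroRow W u) α n recStar))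
    (S : Finset V) (hS : S ⊂ N) :
    ∃ C : ℝ, 0 < C ∧
      PPR (renormDel W u S) α u rec - PPR (renormDel W u S) α u recStar
        = C * ∑ n ∈ N \ S, c n := by
  obtain ⟨hα0, hα1⟩ := hα
  have hβpos : (0:ℝ) < 1 - α := by linarith
  have hβ1 : (1:ℝ) - α < 1 := by linarith
  have hβ0 : (0:ℝ) ≤ 1 - α := le_of_lt hβpos
  -- σ < 1
  obtain ⟨n₀, hn₀N, hn₀S⟩ := Finset.exists_of_ssubset hS
  have hn₀pos : 0 < W u n₀ := by
    rw [hN] at hn₀N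
    exact (Finset.mem_filter.mp hn₀N).2
  have hσlt : ∑ x ∈ S, W u x < 1 := by
    have h1 : ∑ x ∈ insert n₀ S, W u x ≤ ∑ x, W u x :=
      Finset.sum_le_sum_of_subset_of_nonneg (Finset.subset_univ _) (fun i _ _ => hW.1 u i)
    rw [Finset.sum_insert hn₀S, hW.2 u] at h1
    linarith
  have hσpos : 0 < 1 - ∑ x ∈ S, W u x := by linarith
  -- the matrices
  have hRu : ∀ m, zeroRow W u u m = 0 := fun m => by simp [zeroRow]
  have hRent : ∀ n m, n ≠ u → zeroRow W u n m = W n m := fun n m h => by simp [zeroRow, h]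
  have hR : SubStoch (zeroRow W u) := by
    constructor
    · intro i j
      by_cases h : i = u
      · subst h; rw [hRu]
      · rw [hRent i j h]; exact hW.1 i j
    · intro i
      by_cases h : i = u
      · subst h; simp [hRu]
      · calc ∑ j, zeroRow W u i j = ∑ j, W i j := Finset.sum_congr rfl fun j _ => hRent i j h
          _ ≤ 1 := le_of_eq (hW.2 i)
  have hMu : ∀ m, renormDel W u S u m
      = if m ∈ S then 0 else W u m / (1 - ∑ x ∈ S, W u x) := fun m => by simp [renormDel]
  have hMent : ∀ n m, n ≠ u → renormDel W u S n m = W n m := fun n m h => by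
    simp [renormDel, h]
  have hMR : ∀ n m, n ≠ u → renormDel W u S n m = zeroRow W u n m := fun n m h => by
    rw [hMent n m h, hRent n m h]
  have hsum_ite : ∀ g : V → ℝ,
      ∑ m, (if m ∈ S then (0:ℝ) else g m) = ∑ m ∈ Finset.univ \ S, g m := by
    intro g
    rw [← Finset.sum_sdiff (Finset.subset_univ S)]
    rw [Finset.sum_eq_zero (fun m hm => if_pos hm), add_zero]
    exact Finset.sum_congr rfl fun m hm => if_neg (Finset.mem_sdiff.mp hm).2
  have hsplit : ∑ m ∈ Finset.univ \ S, W u m = 1 - ∑ x ∈ S, W u x := by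
    have h := Finset.sum_sdiff (f := fun m => W u m) (Finset.subset_univ S)
    rw [hW.2 u] at h
    linarith
  have hwsum : ∑ m, renormDel W u S u m = 1 := by
    calc ∑ m, renormDel W u S u m
        = ∑ m, (if m ∈ S then (0:ℝ) else W u m / (1 - ∑ x ∈ S, W u x)) :=
          Finset.sum_congr rfl fun m _ => hMu m
      _ = ∑ m ∈ Finset.univ \ S, W u m / (1 - ∑ x ∈ S, W u x) := hsum_ite _
      _ = (∑ m ∈ Finset.univ \ S, W u m) / (1 - ∑ x ∈ S, W u x) := by rw [Finset.sum_div]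
      _ = 1 := by rw [hsplit]; exact div_self (ne_of_gt hσpos)
  have hM : SubStoch (renormDel W u S) := by
    constructor
    · intro i j
      by_cases h : i = u
      · subst h; rw [hMu]
        split
        · exact le_refl 0
        · exact div_nonneg (hW.1 _ j) (le_of_lt hσpos)
      · rw [hMent i j h]; exact hW.1 i j
    · intro i
      by_cases h : i = u
      · subst h; exact le_of_eq hwsum
      · calc ∑ j, renormDel W u S i j = ∑ j, W i j :=
            Finset.sum_congr rfl fun j _ => hMent i j h
          _ ≤ 1 := le_of_eq (hW.2 i)
  have hMuu' : renormDel W u S u u = 0 := by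
    rw [hMu u]; split
    · rfl
    · rw [hWuu, zero_div]
  obtain ⟨t, htpos, hform⟩ := row_formula hR hM hRu hMR hβpos hβ1 hwsum hMuu'
  have hPPR : ∀ (A : Matrix V V ℝ) (s v : V), PPR A α s v = α * Gm A (1 - α) s v :=
    fun A s v => rfl
  have h1 := hform rec
  have h2 := hform recStar
  rw [if_neg (fun h => hrec h.symm), zero_add] at h1
  rw [if_neg (fun h => hrecStar h.symm), zero_add] at h2
  refine ⟨t / (1 - ∑ x ∈ S, W u x), div_pos htpos hσpos, ?_⟩
  have hDsum : ∑ n, renormDel W u S u n * Gm (zeroRow W u) (1-α) n rec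
      - ∑ n, renormDel W u S u n * Gm (zeroRow W u) (1-α) n recStar
      = (1 / (1 - ∑ x ∈ S, W u x)) * ∑ n ∈ N \ S,
          W u n * (Gm (zeroRow W u) (1-α) n rec - Gm (zeroRow W u) (1-α) n recStar) := by
    rw [← Finset.sum_sub_distrib]
    calc ∑ n, (renormDel W u S u n * Gm (zeroRow W u) (1-α) n rec
            - renormDel W u S u n * Gm (zeroRow W u) (1-α) n recStar)
        = ∑ n, (if n ∈ S then (0:ℝ) else (1 / (1 - ∑ x ∈ S, W u x)) * (W u n *
            (Gm (zeroRow W u) (1-α) n rec - Gm (zeroRow W u) (1-α) n recStar))) := by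
          refine Finset.sum_congr rfl fun n _ => ?_
          rw [hMu n]
          split
          · simp
          · ring
      _ = ∑ n ∈ Finset.univ \ S, (1 / (1 - ∑ x ∈ S, W u x)) * (W u n *
            (Gm (zeroRow W u) (1-α) n rec - Gm (zeroRow W u) (1-α) n recStar)) := hsum_ite _
      _ = (1 / (1 - ∑ x ∈ S, W u x)) * ∑ n ∈ Finset.univ \ S, W u n *
            (Gm (zeroRow W u) (1-α) n rec - Gm (zeroRow W u) (1-α) n recStar) := by
          rw [Finset.mul_sum]
      _ = (1 / (1 - ∑ x ∈ S, W u x)) * ∑ n ∈ N \ S, W u n *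
            (Gm (zeroRow W u) (1-α) n rec - Gm (zeroRow W u) (1-α) n recStar) := by
          congr 1
          refine (Finset.sum_subset ?_ ?_).symm
          · intro x hx
            rw [Finset.mem_sdiff] at hx ⊢
            exact ⟨Finset.mem_univ x, hx.2⟩
          · intro x hx hnx
            have hxS : x ∉ S := (Finset.mem_sdiff.mp hx).2
            have hxN : x ∉ N := fun hxN => hnx (Finset.mem_sdiff.mpr ⟨hxN, hxS⟩)
            have hW0 : W u x = 0 := by
              by_contra hne
              have hpos : 0 < W u x := lt_of_le_of_ne (hW.1 u x) (Ne.symm hne)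
              exact hxN (by rw [hN]; exact Finset.mem_filter.mpr ⟨Finset.mem_univ x, hpos⟩)
            rw [hW0, zero_mul]
  have hcsum : ∑ n ∈ N \ S, c n = α * ∑ n ∈ N \ S,
      W u n * (Gm (zeroRow W u) (1-α) n rec - Gm (zeroRow W u) (1-α) n recStar) := by
    rw [Finset.mul_sum]
    refine Finset.sum_congr rfl fun n _ => ?_
    rw [hc n, hPPR, hPPR]
    ring
  rw [hPPR, hPPR, h1, h2, hcsum]
  linear_combination (α * t) * hDsum

end key

theorem greedy_counterfactual_optimal
    {V : Type*} [Fintype V] [DecidableEq V] (W : Matrix V V ℝ)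
    (hW : RowStochastic W) (α : ℝ) (hα : α ∈ Set.Ioo (0 : ℝ) 1)
    (u : V) (hWuu : W u u = 0)
    (rec recStar : V) (hrec : rec ≠ u) (hrecStar : recStar ≠ u)
    (hWrec : W u rec = 0) (hWrecStar : W u recStar = 0)
    (N : Finset V) (hN : N = Finset.univ.filter (fun n => 0 < W u n))
    (c : V → ℝ)
    (hc : ∀ n, c n =
      W u n * (PPR (zeroRow W u) α n rec - PPR (zeroRow W u) α n recStar)) :
    (∀ S : Finset V, S ⊂ N →
      (PPR (renormDel W u S) α u rec < PPR (renormDel W u S) α u recStar ↔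
        ∑ n ∈ N \ S, c n < 0)) ∧
    (∀ k : ℕ,
      (∃ S : Finset V, S ⊂ N ∧ S.card = k ∧
        PPR (renormDel W u S) α u rec < PPR (renormDel W u S) α u recStar) →
      ∀ T : Finset V, T ⊂ N → T.card = k →
        (∀ i ∈ T, ∀ j ∈ N \ T, c j ≤ c i) →
        PPR (renormDel W u T) α u rec < PPR (renormDel W u T) α u recStar) := by
  have hiff : ∀ S : Finset V, S ⊂ N →
      (PPR (renormDel W u S) α u rec < PPR (renormDel W u S) α u recStar ↔
        ∑ n ∈ N \ S, c n < 0) := by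
    intro S hS
    obtain ⟨C, hC, hEq⟩ :=
      key_formula W hW α hα u hWuu rec recStar hrec hrecStar N hN c hc S hS
    constructor
    · intro h
      have hneg : C * ∑ n ∈ N \ S, c n < 0 := by rw [← hEq]; linarith
      nlinarith
    · intro h
      have hneg : C * ∑ n ∈ N \ S, c n < 0 := mul_neg_of_pos_of_neg hC h
      rw [← hEq] at hneg
      linarith
  refine ⟨hiff, ?_⟩
  rintro k ⟨S, hS, hSk, hScf⟩ T hT hTk hgreedy
  have hSsum : ∑ n ∈ N \ S, c n < 0 := (hiff S hS).mp hScf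
  -- combinatorial step: sum over N \ T is at most sum over N \ S
  have hcard : (N \ S).card = (N \ T).card := by
    rw [Finset.card_sdiff_of_subset hS.subset, Finset.card_sdiff_of_subset hT.subset, hSk, hTk]
  have hcard2 : ((N \ T) \ (N \ S)).card = ((N \ S) \ (N \ T)).card :=
    Finset.card_sdiff_comm hcard.symm
  have e := Finset.equivOfCardEq hcard2
  have hstep : ∑ n ∈ (N \ T) \ (N \ S), c n ≤ ∑ n ∈ (N \ S) \ (N \ T), c n := by
    rw [← Finset.sum_coe_sort ((N \ T) \ (N \ S)) c,
      ← Finset.sum_coe_sort ((N \ S) \ (N \ T)) c,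
      ← Equiv.sum_comp e (fun y : ((N \ S) \ (N \ T) : Finset V) => c ↑y)]
    refine Finset.sum_le_sum fun x _ => ?_
    have hx : (x : V) ∈ N \ T := (Finset.mem_sdiff.mp x.2).1
    have hex := (e x).2
    rw [Finset.mem_sdiff] at hex
    have hexN : ((e x) : V) ∈ N := (Finset.mem_sdiff.mp hex.1).1
    have hexT : ((e x) : V) ∈ T := by
      by_contra hnot
      exact hex.2 (Finset.mem_sdiff.mpr ⟨hexN, hnot⟩)
    exact hgreedy _ hexT _ hx
  have hle : ∑ n ∈ N \ T, c n ≤ ∑ n ∈ N \ S, c n := by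
    have hA := Finset.sum_inter_add_sum_sdiff (N \ S) (N \ T) c
    have hB := Finset.sum_inter_add_sum_sdiff (N \ T) (N \ S) c
    rw [Finset.inter_comm] at hB
    linarith
  have hTsum : ∑ n ∈ N \ T, c n < 0 := lt_of_le_of_lt hle hSsum
  exact (hiff T hT).mpr hTsum
end
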